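/- arXiv:1909.00092 — 5 statements merged into one kernel-verified Lean document; each statement's English description precedes it below -/
import Mathlib

section
/- Every real skew-symmetric matrix A of order n can be factored as A = Q M Qᵀ, where Q is orthogonal and M is lower antitriangular (all entries strictly above the main antidiagonal are zero), and M is itself skew-symmetric. -/
/-!
With `T` the skew-adjoint operator of `A` and `Q` the matrix whose columns are an orthonormal
basis `f`, the entries of `M = Qᵀ A Q` are `⟪f i, T (f j)⟫`. Such a basis is built from the outside
in. Take any unit vector `v`. As `⟪v, T v⟫ = 0`, on `v^⊥` the functional `⟪·, T v⟫` is `⟪·, w⟫` for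
some `w ⊥ v`; choose a unit `u ⊥ v` with `w ∈ ℝ u`. Putting `f₀ = v` and `f_{n-1} = u`, every vector
orthogonal to `u` and `v` is killed by `⟪·, T v⟫`, which clears the first row and column up to the
antidiagonal. Recursing in `{v, u}^⊥`, of dimension `n - 2` and with the same `T`, fills in the
middle vectors.
-/

open Matrix ComplexOrder

open Module Submodule RealInnerProductSpace

section Orthonormal

variable {𝕜 E : Type*} [RCLike 𝕜] [NormedAddCommGroup E] [InnerProductSpace 𝕜 E]

local notation "⟪" x ", " y "⟫" => inner 𝕜 x y

theorem orthonormal_comp_rev_iff {n : ℕ} {v : Fin n → E} :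
    Orthonormal 𝕜 (v ∘ Fin.rev) ↔ Orthonormal 𝕜 v :=
  ⟨fun h => by simpa [Function.comp_def] using h.comp Fin.rev Fin.rev_injective,
    fun h => h.comp Fin.rev Fin.rev_injective⟩

theorem orthonormal_snoc_iff {n : ℕ} {v : E} {vs : Fin n → E} :
    Orthonormal 𝕜 (Fin.snoc vs v : Fin (n + 1) → E) ↔
      ‖v‖ = 1 ∧ (∀ i, ⟪v, vs i⟫ = 0) ∧ Orthonormal 𝕜 vs := by
  rw [← orthonormal_comp_rev_iff, Fin.snoc_comp_rev, ← orthonormal_comp_rev_iff (v := vs)]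
  exact (orthonormal_vecCons_iff (vs := vs ∘ Fin.rev)).trans <| and_congr_right' <|
    and_congr_left' (Fin.rev_surjective.forall (p := fun i => ⟪v, vs i⟫ = 0)).symm

end Orthonormal

section Normalize

variable {E : Type*} [NormedAddCommGroup E] [NormedSpace ℝ E]

theorem Submodule.exists_norm_eq_one_mem {K : Submodule ℝ E} (hK : K ≠ ⊥) :
    ∃ u ∈ K, ‖u‖ = 1 := by
  obtain ⟨x, hxK, hx⟩ := exists_mem_ne_zero_of_ne_bot hK
  exact ⟨‖x‖⁻¹ • x, K.smul_mem _ hxK, norm_smul_inv_norm hx⟩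

theorem Submodule.exists_norm_eq_one_mem_span_singleton {K : Submodule ℝ E} (hK : K ≠ ⊥)
    {w : E} (hw : w ∈ K) : ∃ u ∈ K, ‖u‖ = 1 ∧ w ∈ ℝ ∙ u := by
  by_cases hw0 : w = 0
  · obtain ⟨u, huK, hu⟩ := K.exists_norm_eq_one_mem hK
    exact ⟨u, huK, hu, hw0 ▸ zero_mem _⟩
  · refine ⟨‖w‖⁻¹ • w, K.smul_mem _ hw, norm_smul_inv_norm hw0, mem_span_singleton.2 ⟨‖w‖, ?_⟩⟩
    rw [smul_smul, mul_inv_cancel₀ (norm_ne_zero_iff.2 hw0), one_smul]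

end Normalize

section Antitriangular

variable {E : Type*} [NormedAddCommGroup E] [InnerProductSpace ℝ E]

theorem Submodule.finrank_orthogonal_span_singleton_inf {W : Submodule ℝ E}
    [FiniteDimensional ℝ W] {v : E} (hvW : v ∈ W) (hv : v ≠ 0) :
    finrank ℝ ((ℝ ∙ v)ᗮ ⊓ W : Submodule ℝ E) + 1 = finrank ℝ W := by
  rw [← finrank_add_inf_finrank_orthogonal ((span_singleton_le_iff_mem v W).2 hvW),
    finrank_span_singleton hv, add_comm]

theorem Submodule.exists_orthonormal_mem {n : ℕ} {W : Submodule ℝ E} [FiniteDimensional ℝ W]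
    (hW : finrank ℝ W = n) : ∃ f : Fin n → E, Orthonormal ℝ f ∧ ∀ i, f i ∈ W :=
  let b := (stdOrthonormalBasis ℝ W).reindex (finCongr hW)
  ⟨fun i => b i, b.orthonormal.comp_linearIsometry W.subtypeₗᵢ, fun i => (b i).2⟩

theorem inner_cons_snoc_map_eq_zero {T : E →ₗ[ℝ] E} (hT : ∀ x y, ⟪T x, y⟫ = -⟪x, T y⟫)
    {n : ℕ} {v u : E} {f : Fin n → E} (hfv : ∀ i, ⟪f i, T v⟫ = 0)
    (hf : ∀ i j : Fin n, (i : ℕ) + j + 2 ≤ n → ⟪f i, T (f j)⟫ = 0) :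
    let g : Fin (n + 2) → E := Fin.cons v (Fin.snoc f u)
    ∀ i j : Fin (n + 2), (i : ℕ) + j + 2 ≤ n + 2 → ⟪g i, T (g j)⟫ = 0 := by
  intro g
  have hvv : ⟪v, T v⟫ = 0 := by
    have := hT v v
    rw [real_inner_comm] at this
    linarith
  have hgv : ∀ j : Fin (n + 1), (j : ℕ) < n → ⟪g j.succ, T v⟫ = 0 := by
    intro j hj
    induction j using Fin.lastCases with
    | last => simp at hj
    | cast j => simpa [g] using hfv j
  intro i j hij
  induction i using Fin.cases with
  | zero =>
    rw [← neg_eq_zero, ← hT, real_inner_comm]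
    induction j using Fin.cases with
    | zero => exact hvv
    | succ j => exact hgv j (by simpa using hij)
  | succ i =>
    induction j using Fin.cases with
    | zero => exact hgv i (by simpa using hij)
    | succ j =>
      induction i using Fin.lastCases with
      | last => simp only [Fin.val_succ, Fin.val_last] at hij; omega
      | cast i =>
        induction j using Fin.lastCases with
        | last => simp only [Fin.val_succ, Fin.val_last] at hij; omega
        | cast j =>
          simpa [g] using hf i j (by simp only [Fin.val_succ, Fin.val_castSucc] at hij; omega)

variable [FiniteDimensional ℝ E]

theorem exists_orthonormal_inner_map_antitriangular {T : E →ₗ[ℝ] E}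
    (hT : ∀ x y, ⟪T x, y⟫ = -⟪x, T y⟫) :
    ∀ (n : ℕ) (W : Submodule ℝ E), finrank ℝ W = n →
      ∃ f : Fin n → E, Orthonormal ℝ f ∧ (∀ i, f i ∈ W) ∧
        ∀ i j : Fin n, (i : ℕ) + j + 2 ≤ n → ⟪f i, T (f j)⟫ = 0
  | 0, W, hW | 1, W, hW => by
    obtain ⟨f, hf, hfW⟩ := W.exists_orthonormal_mem hW
    exact ⟨f, hf, hfW, fun i j hij => by omega⟩
  | n + 2, W, hW => by
    obtain ⟨v, hvW, hv⟩ := W.exists_norm_eq_one_mem (finrank_eq_zero.not.1 (by omega))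
    have hK := finrank_orthogonal_span_singleton_inf hvW (norm_ne_zero_iff.1 (by simp [hv]))
    set K := (ℝ ∙ v)ᗮ ⊓ W
    have hKTv : ∀ x ∈ K, ⟪x, K.starProjection (T v)⟫ = ⟪x, T v⟫ := fun x hx => by
      rw [← inner_starProjection_left_eq_right, K.starProjection_eq_self_iff.2 hx]
    obtain ⟨u, huK, hu, hTvu⟩ := K.exists_norm_eq_one_mem_span_singleton
      (finrank_eq_zero.not.1 (by omega)) (K.starProjection_apply_mem (T v))
    have hK' := finrank_orthogonal_span_singleton_inf huK (norm_ne_zero_iff.1 (by simp [hu]))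
    obtain ⟨f, hf, hfK', hfT⟩ :=
      exists_orthonormal_inner_map_antitriangular hT n ((ℝ ∙ u)ᗮ ⊓ K) (by omega)
    have hfu (i : Fin n) : ⟪u, f i⟫ = 0 := mem_orthogonal_singleton_iff_inner_right.1 (hfK' i).1
    have hfv (i : Fin n) : ⟪v, f i⟫ = 0 :=
      mem_orthogonal_singleton_iff_inner_right.1 (hfK' i).2.1
    have hfTv (i : Fin n) : ⟪f i, T v⟫ = 0 := by
      obtain ⟨c, hc⟩ := mem_span_singleton.1 hTvu
      rw [← hKTv _ (hfK' i).2, ← hc, inner_smul_right, real_inner_comm, hfu, mul_zero]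
    refine ⟨Fin.cons v (Fin.snoc f u),
      orthonormal_vecCons_iff.2 ⟨hv, ?_, orthonormal_snoc_iff.2 ⟨hu, hfu, hf⟩⟩, ?_,
      inner_cons_snoc_map_eq_zero hT hfTv hfT⟩
    · intro i
      induction i using Fin.lastCases with
      | last => simpa using mem_orthogonal_singleton_iff_inner_right.1 huK.1
      | cast i => simpa using hfv i
    · intro i
      induction i using Fin.cases with
      | zero => simpa using hvW
      | succ i =>
        induction i using Fin.lastCases with
        | last => simpa using huK.2
        | cast i => simpa using (hfK' i).2.2

end Antitriangular

section Matrix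

variable {m ι : Type*} [Fintype m]

def Matrix.ofCols (f : ι → EuclideanSpace ℝ m) : Matrix m ι ℝ := of fun k l => f l k

theorem Matrix.ofCols_transpose_mul_ofCols [Fintype ι] (f : ι → EuclideanSpace ℝ m) :
    (ofCols f)ᵀ * ofCols f = gram ℝ f := by
  simpa [ofCols] using (gram_eq_conjTranspose_mul (EuclideanSpace.basisFun m ℝ) f).symm

variable [DecidableEq m]

theorem Matrix.ofCols_transpose_mul_mul_ofCols_apply [Fintype ι] (f : ι → EuclideanSpace ℝ m)
    (A : Matrix m m ℝ) (i j : ι) :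
    ((ofCols f)ᵀ * A * ofCols f) i j = ⟪f i, toEuclideanLin A (f j)⟫ := by
  simp only [ofCols, mul_apply, transpose_apply, of_apply, Finset.sum_mul, toEuclideanLin,
    PiLp.inner_apply, ofLp_toLpLin, toLin'_apply, mulVec, dotProduct, RCLike.inner_apply,
    Real.ringHom_apply]
  rw [Finset.sum_comm]
  exact Finset.sum_congr rfl fun _ _ => Finset.sum_congr rfl fun _ _ => by ring

theorem Matrix.inner_toEuclideanLin_of_transpose_eq_neg {A : Matrix m m ℝ} (hA : Aᵀ = -A)
    (x y : EuclideanSpace ℝ m) : ⟪toEuclideanLin A x, y⟫ = -⟪x, toEuclideanLin A y⟫ := by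
  rw [← LinearMap.adjoint_inner_right, ← toEuclideanLin_conjTranspose_eq_adjoint,
    conjTranspose_eq_transpose_of_trivial, hA, map_neg, LinearMap.neg_apply, inner_neg_right]

end Matrix

/-- Every real skew-symmetric matrix `A` of order `n` can be factored as
`A = Q M Qᵀ` with `Q` orthogonal and `M` skew-symmetric and lower antitriangular
(all entries strictly above the main antidiagonal vanish, i.e. `M i j = 0`
whenever `i + j + 2 ≤ n`, 0-indexed). -/
theorem skew_symmetric_antitriangular_factorization {n : ℕ}
    (A : Matrix (Fin n) (Fin n) ℝ) (hA : Aᵀ = -A) :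
    ∃ Q M : Matrix (Fin n) (Fin n) ℝ,
      Qᵀ * Q = 1 ∧ Mᵀ = -M ∧
      (∀ i j : Fin n, (i : ℕ) + (j : ℕ) + 2 ≤ n → M i j = 0) ∧
      A = Q * M * Qᵀ := by
  obtain ⟨f, hf, -, hfA⟩ := exists_orthonormal_inner_map_antitriangular
    (inner_toEuclideanLin_of_transpose_eq_neg hA) n ⊤ (by simp)
  have hQ : (ofCols f)ᵀ * ofCols f = 1 := by
    rw [ofCols_transpose_mul_ofCols, gram_eq_one_iff_orthonormal.2 hf]
  refine ⟨ofCols f, (ofCols f)ᵀ * A * ofCols f, hQ, ?_, fun i j hij => ?_, ?_⟩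
  · simp [Matrix.transpose_mul, hA, Matrix.mul_assoc]
  · rw [ofCols_transpose_mul_mul_ofCols_apply]
    exact hfA i j hij
  · rw [← Matrix.mul_assoc, ← Matrix.mul_assoc, mul_eq_one_comm.1 hQ, Matrix.one_mul,
      Matrix.mul_assoc, mul_eq_one_comm.1 hQ, Matrix.mul_one]
end

section
/- If M is a real skew-symmetric antitriangular matrix of even order n = 2p (entries above the antidiagonal are zero), then det(M) = m_{1,2p}² · m_{2,2p-1}² · ⋯ · m_{p,p+1}², the product of the squares of the antidiagonal entries in its upper half. -/
open Matrix ComplexOrder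

theorem sign_revPerm (n : ℕ) :
    Equiv.Perm.sign (Fin.revPerm : Equiv.Perm (Fin n)) = (-1) ^ (n * (n - 1) / 2) := by
  induction n with
  | zero => simp [Subsingleton.elim (Fin.revPerm : Equiv.Perm (Fin 0)) 1]
  | succ n ih =>
    have key : (Fin.revPerm : Equiv.Perm (Fin (n + 1))) =
        Equiv.Perm.decomposeFin.symm (0, Fin.revPerm) * finRotate (n + 1) := by
      ext i
      induction i using Fin.lastCases with
      | last => simp [Fin.rev_last]
      | cast j =>
        simp [Fin.rev_castSucc, finRotate_succ_apply]

    rw [key, _root_.map_mul, sign_finRotate, Equiv.Perm.decomposeFin.symm_sign, ih]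
    norm_num [← pow_add]
    congr 1
    rcases n with _ | m
    · simp
    · obtain ⟨k, hk⟩ := Nat.even_mul_succ_self m
      have h2 : (m + 1) * m = k + k := by rw [mul_comm]; exact hk
      simp only [Nat.add_sub_cancel]
      have h3 : (m + 1 + 1) * (m + 1) = (k + k) + 2 * (m + 1) := by rw [← hk]; ring
      rw [h2, h3]
      omega


/-- If `M` is a real skew-symmetric antitriangular matrix of even order `n = 2p`
(entries strictly above the antidiagonal vanish), then
`det M = ∏ k, (M k (2p-1-k))²`, the product over the upper half of the
antidiagonal of the squares of the antidiagonal entries. -/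
theorem det_skew_antitriangular_even {p : ℕ}
    (M : Matrix (Fin (2 * p)) (Fin (2 * p)) ℝ) (hskew : Mᵀ = -M)
    (hanti : ∀ i j : Fin (2 * p), (i : ℕ) + (j : ℕ) + 2 ≤ 2 * p → M i j = 0) :
    M.det = ∏ k : Fin p,
      (M ⟨(k : ℕ), by have := k.isLt; omega⟩
         ⟨2 * p - 1 - (k : ℕ), by have := k.isLt; omega⟩) ^ 2 := by
  have hskew' : ∀ i j, M i j = - M j i := by
    intro i j
    have := congrFun (congrFun hskew j) i
    simpa [Matrix.transpose_apply] using this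
  have hrev : M = (M.submatrix id ⇑Fin.revPerm).submatrix id ⇑Fin.revPerm := by
    ext i j
    simp [Matrix.submatrix_apply, Fin.rev_rev]
  have htri : (M.submatrix id ⇑Fin.revPerm).BlockTriangular OrderDual.toDual := by
    intro i j h
    have hij : (i : ℕ) < (j : ℕ) := h
    simp only [Matrix.submatrix_apply, id_eq]
    apply hanti
    have hjr : ((Fin.revPerm j : Fin (2 * p)) : ℕ) = 2 * p - 1 - (j : ℕ) := by
      simp [Fin.val_rev]; omega
    rw [hjr]
    have := j.isLt
    omega
  have hdet1 : M.det =
      ((Equiv.Perm.sign (Fin.revPerm : Equiv.Perm (Fin (2 * p))) : ℤ) : ℝ) *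
        ∏ i : Fin (2 * p), M i (Fin.revPerm i) := by
    conv_lhs => rw [hrev]
    rw [Matrix.det_permute', Matrix.det_of_lowerTriangular _ htri]
    congr 1

  have hp2 : ∀ k : Fin p, (k : ℕ) < 2 * p := fun k => by have := k.isLt; omega
  let g : Fin p → ℝ := fun k =>
    M ⟨(k : ℕ), by have := k.isLt; omega⟩ ⟨2 * p - 1 - (k : ℕ), by have := k.isLt; omega⟩
  let F : ℕ → ℝ := fun i => if h : i < 2 * p then M ⟨i, h⟩ (Fin.rev ⟨i, h⟩) else 1
  have h1 : ∏ i : Fin (2 * p), M i (Fin.revPerm i) = ∏ i ∈ Finset.range (2 * p), F i := by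
    rw [← Fin.prod_univ_eq_prod_range]
    refine Finset.prod_congr rfl fun i _ => ?_
    simp [F]
  have h2 : ∏ i ∈ Finset.range (2 * p), F i =
      (∏ i ∈ Finset.range p, F i) * ∏ i ∈ Finset.range p, F (p + i) := by
    rw [two_mul, Finset.prod_range_add]
  have h3 : ∏ i ∈ Finset.range p, F i = ∏ k : Fin p, g k := by
    rw [← Fin.prod_univ_eq_prod_range]
    refine Finset.prod_congr rfl fun k _ => ?_
    simp only [F, dif_pos (hp2 k), g]
    congr 1
    refine Fin.ext ?_
    simp [Fin.val_rev]
    omega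
  have h4 : ∏ i ∈ Finset.range p, F (p + i) = (-1) ^ p * ∏ k : Fin p, g k := by
    rw [← Fin.prod_univ_eq_prod_range (fun i => F (p + i))]
    have step : ∀ k : Fin p, F (p + (k : ℕ)) = -1 * g (Fin.revPerm k) := by
      intro k
      have hk := k.isLt
      have hlt : p + (k : ℕ) < 2 * p := by omega
      simp only [F, dif_pos hlt, g, Fin.revPerm_apply]
      rw [hskew']
      have e1 : (Fin.rev (⟨p + (k : ℕ), hlt⟩ : Fin (2 * p))) =
          (⟨(Fin.rev k : ℕ), by have := (Fin.rev k).isLt; omega⟩ : Fin (2 * p)) := by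
        refine Fin.ext ?_
        simp [Fin.val_rev]
        omega
      have e2 : (⟨p + (k : ℕ), hlt⟩ : Fin (2 * p)) =
          (⟨2 * p - 1 - (Fin.rev k : ℕ), by have := (Fin.rev k).isLt; omega⟩ : Fin (2 * p)) := by
        refine Fin.ext ?_
        simp [Fin.val_rev]
        omega
      rw [e1, e2]
      ring
    calc ∏ k : Fin p, F (p + (k : ℕ))
        = ∏ k : Fin p, -1 * g (Fin.revPerm k) := Finset.prod_congr rfl fun k _ => step k
      _ = (∏ _k : Fin p, (-1 : ℝ)) * ∏ k : Fin p, g (Fin.revPerm k) := by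
          rw [Finset.prod_mul_distrib]
      _ = (-1) ^ p * ∏ k : Fin p, g k := by
          rw [Finset.prod_const, Finset.card_univ, Fintype.card_fin,
            Equiv.prod_comp Fin.revPerm g]
  have hsign : (((Equiv.Perm.sign (Fin.revPerm : Equiv.Perm (Fin (2 * p))) : ℤ)) : ℝ) =
      (-1 : ℝ) ^ (p * (2 * p - 1)) := by
    rw [sign_revPerm]
    have he : 2 * p * (2 * p - 1) / 2 = p * (2 * p - 1) := by
      rw [mul_assoc]
      exact Nat.mul_div_cancel_left _ two_pos
    rw [he]
    push_cast
    ring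
  have heven : Even (p * (2 * p - 1) + p) := by
    rcases p with _ | q
    · simp
    · have : (q + 1) * (2 * (q + 1) - 1) + (q + 1) = 2 * ((q + 1) * (q + 1)) := by
        have h5 : 2 * (q + 1) - 1 = 2 * q + 1 := by omega
        rw [h5]; ring
      rw [this]
      exact even_two_mul _
  have hc : (-1 : ℝ) ^ (p * (2 * p - 1)) * (-1 : ℝ) ^ p = 1 := by
    rw [← pow_add]
    exact Even.neg_one_pow heven
  rw [hdet1, h1, h2, h3, h4, hsign]
  have hgoal : ∀ k : Fin p, (M ⟨(k : ℕ), by have := k.isLt; omega⟩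
      ⟨2 * p - 1 - (k : ℕ), by have := k.isLt; omega⟩) ^ 2 = (g k) ^ 2 := fun k => rfl
  calc (-1 : ℝ) ^ (p * (2 * p - 1)) *
        ((∏ k : Fin p, g k) * ((-1) ^ p * ∏ k : Fin p, g k))
      = ((-1 : ℝ) ^ (p * (2 * p - 1)) * (-1 : ℝ) ^ p) * (∏ k : Fin p, g k) ^ 2 := by ring
    _ = (∏ k : Fin p, g k) ^ 2 := by rw [hc, one_mul]
    _ = ∏ k : Fin p, (g k) ^ 2 := (Finset.prod_pow _ _ _).symm
end

section
/- If M is a real skew-symmetric antitriangular matrix of order n all of whose antidiagonal entries M(k, n+1-k), k = 1,…,n, are nonzero, then n is even and M is invertible; consequently rank(M) = n. -/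
open Matrix ComplexOrder

/-- If `M` is a real skew-symmetric antitriangular matrix of order `n` all of whose
antidiagonal entries are nonzero, then `n` is even and `M` is invertible;
consequently `rank M = n`. -/
theorem skew_antitriangular_nonzero_antidiag {n : ℕ}
    (M : Matrix (Fin n) (Fin n) ℝ) (hskew : Mᵀ = -M)
    (hanti : ∀ i j : Fin n, (i : ℕ) + (j : ℕ) + 2 ≤ n → M i j = 0)
    (hdiag : ∀ k : Fin n, M k ⟨n - 1 - (k : ℕ), by have := k.isLt; omega⟩ ≠ 0) :
    Even n ∧ IsUnit M ∧ M.rank = n := by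
  -- N = M with columns reversed, is lower triangular with nonzero diagonal
  set N : Matrix (Fin n) (Fin n) ℝ := M.submatrix id Fin.revPerm with hN
  have hrev : ∀ j : Fin n, ((Fin.revPerm j : Fin n) : ℕ) = n - 1 - (j : ℕ) := by
    intro j
    simp [Fin.revPerm, Fin.rev]
    omega
  have hlow : N.BlockTriangular OrderDual.toDual := by
    intro i j hij
    simp only [OrderDual.toDual_lt_toDual] at hij
    have h1 : (i : ℕ) < (j : ℕ) := hij
    have h2 := j.isLt
    show M i (Fin.revPerm j) = 0
    apply hanti
    rw [hrev]
    omega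
  have hdiagN : ∀ i : Fin n, N i i ≠ 0 := by
    intro i
    have : (Fin.revPerm i : Fin n) = ⟨n - 1 - (i : ℕ), by have := i.isLt; omega⟩ := by
      ext; rw [hrev]
    simp only [hN, Matrix.submatrix_apply, id_eq, this]
    exact hdiag i
  have hdetN : N.det ≠ 0 := by
    rw [Matrix.det_of_lowerTriangular N hlow]
    exact Finset.prod_ne_zero_iff.2 fun i _ => hdiagN i
  have hdet : M.det ≠ 0 := by
    intro h
    rw [hN, Matrix.det_permute', h, mul_zero] at hdetN
    exact hdetN rfl
  have hunit : IsUnit M := by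
    rw [Matrix.isUnit_iff_isUnit_det]
    exact isUnit_iff_ne_zero.2 hdet
  have heven : Even n := by
    by_contra hodd
    have h1 : M.det = (-1 : ℝ) ^ n * M.det := by
      conv_lhs => rw [← Matrix.det_transpose, hskew, Matrix.det_neg]
      simp
    rw [(Nat.not_even_iff_odd.1 hodd).neg_one_pow, neg_one_mul] at h1
    exact hdet (by linarith)
  refine ⟨heven, hunit, ?_⟩
  rw [Matrix.rank_of_isUnit M hunit, Fintype.card_fin]
end

section
/- Let M ∈ ℝ^{n×n} be skew-symmetric and antitriangular with n = 2k - 1 odd. Under conjugation by the permutation matrix P given by the column ordering (e_k, e_{k-1}, e_{k+1}, e_{k-2}, e_{k+2}, …, e_1, e_n), the matrix S = Pᵀ M P satisfies S(i,j) = 0 whenever i < j and j is even, i.e., S has the odd multi-arrowhead pattern in which nonzero off-diagonal entries occur only in odd-indexed columns above the diagonal (and, by skew-symmetry, odd-indexed rows below the diagonal), except the last column/row which may be full. -/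
open Matrix ComplexOrder

/-- Multi-arrowhead form, odd case (Theorem 4.1). Let `M` be skew-symmetric and
antitriangular of odd order `n = 2k - 1`, and let `σ` be the permutation given by
the column ordering `(e_k, e_{k-1}, e_{k+1}, e_{k-2}, e_{k+2}, …, e_1, e_n)`
(0-indexed: `σ j = k - 1 + j/2` for even `j`, `σ j = k - 1 - (j+1)/2` for odd `j`).
Then `S = Pᵀ M P = M.submatrix σ σ` satisfies `S i j = 0` for `i < j ≤ n - 1`
with `j` even (1-indexed), i.e. 0-indexed `i < j ≤ n - 2` with `j` odd. -/
theorem multi_arrowhead_odd {n k : ℕ} (hk : 0 < k) (hn : n = 2 * k - 1)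
    (M : Matrix (Fin n) (Fin n) ℝ) (hskew : Mᵀ = -M)
    (hanti : ∀ i j : Fin n, (i : ℕ) + (j : ℕ) + 2 ≤ n → M i j = 0)
    (σ : Equiv.Perm (Fin n))
    (hσ : ∀ j : Fin n, (σ j : ℕ) =
      if (j : ℕ) % 2 = 0 then k - 1 + (j : ℕ) / 2 else k - 1 - ((j : ℕ) + 1) / 2) :
    ∀ i j : Fin n, (i : ℕ) < (j : ℕ) → (j : ℕ) % 2 = 1 → (j : ℕ) + 2 ≤ n →
      (M.submatrix σ σ) i j = 0 := by
  intro i j hij hjodd hjn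
  have hi := hσ i
  have hj := hσ j
  simp [hjodd] at hj
  rw [Matrix.submatrix_apply]
  apply hanti
  rcases Nat.mod_two_eq_zero_or_one (i : ℕ) with h | h <;> simp [h] at hi <;> omega
end

section
/- Let M ∈ ℝ^{n×n} be skew-symmetric and antitriangular with n = 2k even. Under conjugation by the permutation matrix P given by the column ordering (e_k, e_{k+1}, e_{k-1}, e_{k+2}, e_{k-2}, …, e_1, e_n), the matrix S = Pᵀ M P has multi-arrowhead form: S(i,j) = 0 for all i < j < n with j odd (1-indexed), so that above the diagonal only even-indexed columns and the last column contain nonzero entries. -/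
open Matrix ComplexOrder

/-- Multi-arrowhead form, even case (Theorem 4.1). Let `M` be skew-symmetric and
antitriangular of even order `n = 2k`, and let `σ` be the permutation given by
the column ordering `(e_k, e_{k+1}, e_{k-1}, e_{k+2}, e_{k-2}, …, e_1, e_n)`
(0-indexed: `σ j = k - 1 - j/2 + ...`, precisely `σ j = k - j/2 - 1` for even `j`
and `σ j = k + (j+1)/2 - 1` for odd `j`). Then `S = Pᵀ M P = M.submatrix σ σ`
satisfies `S i j = 0` for `i < j < n` with `j` odd (1-indexed), i.e. 0-indexed
`i < j ≤ n - 2` with `j` even. -/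
theorem multi_arrowhead_even {n k : ℕ} (hk : 0 < k) (hn : n = 2 * k)
    (M : Matrix (Fin n) (Fin n) ℝ) (hskew : Mᵀ = -M)
    (hanti : ∀ i j : Fin n, (i : ℕ) + (j : ℕ) + 2 ≤ n → M i j = 0)
    (σ : Equiv.Perm (Fin n))
    (hσ : ∀ j : Fin n, (σ j : ℕ) =
      if (j : ℕ) % 2 = 0 then k - (j : ℕ) / 2 - 1 else k + ((j : ℕ) + 1) / 2 - 1) :
    ∀ i j : Fin n, (i : ℕ) < (j : ℕ) → (j : ℕ) % 2 = 0 → (j : ℕ) + 2 ≤ n →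
      (M.submatrix σ σ) i j = 0 := by
  intro i j hij hje hjn
  apply hanti
  have hi := hσ i
  have hj' := hσ j
  rw [if_pos hje] at hj'
  by_cases h : (i : ℕ) % 2 = 0 <;> simp [h] at hi <;> omega
end
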